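/- arXiv:2603.22465 — 2 statements merged into one kernel-verified Lean document; each statement's English description precedes it below -/
import Mathlib

section
/- Let C be a real-valued random variable with finite second moment and let f(c) = c. If Cov(C, φ(C)) = 0 for φ strictly decreasing (or more specifically, if Cov(C, φ(C)) = 0 forces degeneracy in the Chebyshev association inequality with f strictly increasing and φ strictly decreasing), then C is almost surely constant. -/
/-!
Symmetrize over an independent copy: on `μ ⊗ μ` the function
`(C ω' - C ω) * (φ (C ω') - φ (C ω))` is nonpositive because `φ` is decreasing, and its
integral is twice the covariance, which vanishes. Hence it vanishes almost everywhere, and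
since `φ` is injective, `C ω = C ω'` for almost every pair `(ω, ω')`.
-/

open MeasureTheory

section Symmetrization

variable {Ω : Type*} [MeasurableSpace Ω] {μ : Measure Ω} {X Y : Ω → ℝ}

lemma integrable_sub_mul_sub_prod [IsFiniteMeasure μ] (hX : Integrable X μ)
    (hY : Integrable Y μ) (hXY : Integrable (fun ω => X ω * Y ω) μ) :
    Integrable (fun p : Ω × Ω => (X p.2 - X p.1) * (Y p.2 - Y p.1)) (μ.prod μ) := by
  refine ((((hXY.comp_fst μ).sub (hX.mul_prod hY)).sub (hY.mul_prod hX)).add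
    (hXY.comp_snd μ)).congr (.of_forall fun p => ?_)
  simp only [Pi.add_apply, Pi.sub_apply]
  ring

lemma integral_sub_mul_sub_prod [IsProbabilityMeasure μ] (hX : Integrable X μ)
    (hY : Integrable Y μ) (hXY : Integrable (fun ω => X ω * Y ω) μ) :
    ∫ p, (X p.2 - X p.1) * (Y p.2 - Y p.1) ∂μ.prod μ =
      2 * (∫ ω, X ω * Y ω ∂μ - (∫ ω, X ω ∂μ) * ∫ ω, Y ω ∂μ) := by
  have h₁ : Integrable (fun p : Ω × Ω => X p.1 * Y p.1 - X p.1 * Y p.2) (μ.prod μ) :=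
    (hXY.comp_fst μ).sub (hX.mul_prod hY)
  have h₂ : Integrable (fun p : Ω × Ω => X p.1 * Y p.1 - X p.1 * Y p.2 - Y p.1 * X p.2)
      (μ.prod μ) := h₁.sub (hY.mul_prod hX)
  calc ∫ p, (X p.2 - X p.1) * (Y p.2 - Y p.1) ∂μ.prod μ
      = ∫ p, X p.1 * Y p.1 - X p.1 * Y p.2 - Y p.1 * X p.2 + X p.2 * Y p.2 ∂μ.prod μ := by
        congr 1 with p; ring
    _ = (∫ p, X p.1 * Y p.1 ∂μ.prod μ) - (∫ p, X p.1 * Y p.2 ∂μ.prod μ)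
          - (∫ p, Y p.1 * X p.2 ∂μ.prod μ) + ∫ p, X p.2 * Y p.2 ∂μ.prod μ := by
        rw [integral_add h₂ (hXY.comp_snd μ), integral_sub h₁ (hY.mul_prod hX),
          integral_sub (hXY.comp_fst μ) (hX.mul_prod hY)]
    _ = 2 * (∫ ω, X ω * Y ω ∂μ - (∫ ω, X ω ∂μ) * ∫ ω, Y ω ∂μ) := by
        rw [integral_fun_fst (fun ω => X ω * Y ω), integral_fun_snd (fun ω => X ω * Y ω),
          integral_prod_mul X Y, integral_prod_mul Y X]
        simp only [probReal_univ, one_smul]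
        ring

lemma Antivary.ae_sub_mul_sub_eq_zero_of_integral_mul_eq [IsProbabilityMeasure μ]
    (hXY_anti : Antivary X Y) (hX : Integrable X μ) (hY : Integrable Y μ)
    (hXY : Integrable (fun ω => X ω * Y ω) μ)
    (hcov : ∫ ω, X ω * Y ω ∂μ = (∫ ω, X ω ∂μ) * ∫ ω, Y ω ∂μ) :
    ∀ᵐ p ∂μ.prod μ, (X p.2 - X p.1) * (Y p.2 - Y p.1) = 0 := by
  have hnonneg : 0 ≤ fun p : Ω × Ω => -((X p.2 - X p.1) * (Y p.2 - Y p.1)) :=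
    fun p => neg_nonneg.2 (hXY_anti.sub_mul_sub_nonpos p.1 p.2)
  have hint : ∫ p, -((X p.2 - X p.1) * (Y p.2 - Y p.1)) ∂μ.prod μ = 0 := by
    rw [integral_neg, integral_sub_mul_sub_prod hX hY hXY, hcov, sub_self, mul_zero, neg_zero]
  filter_upwards [(integral_eq_zero_iff_of_nonneg hnonneg
    (integrable_sub_mul_sub_prod hX hY hXY).neg).1 hint] with p hp
  exact neg_eq_zero.1 hp

end Symmetrization

lemma ae_eq_const_of_ae_prod_eq {Ω β : Type*} [MeasurableSpace Ω] {μ : Measure Ω} [SFinite μ]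
    [NeZero μ] {X : Ω → β} (h : ∀ᵐ p ∂μ.prod μ, X p.1 = X p.2) :
    ∃ a, X =ᵐ[μ] fun _ => a := by
  obtain ⟨ω₀, hω₀⟩ := (Measure.ae_ae_of_ae_prod h).exists
  exact ⟨X ω₀, hω₀.mono fun ω hω => hω.symm⟩

theorem chebyshev_association_equality_case_general
    {Ω : Type*} [MeasurableSpace Ω] (μ : Measure Ω) [IsProbabilityMeasure μ]
    (C : Ω → ℝ) (φ : ℝ → ℝ)
    (hC2 : MemLp C 2 μ)
    (hφ : StrictAnti φ)
    (hφint : Integrable (fun ω => φ (C ω)) μ)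
    (hprod : Integrable (fun ω => C ω * φ (C ω)) μ)
    (hcov : ∫ ω, C ω * φ (C ω) ∂μ = (∫ ω, C ω ∂μ) * ∫ ω, φ (C ω) ∂μ) :
    ∃ a : ℝ, C =ᵐ[μ] fun _ => a := by
  have hanti : Antivary C fun ω => φ (C ω) := (monotone_id.antivary hφ.antitone).comp_right C
  have hzero := hanti.ae_sub_mul_sub_eq_zero_of_integral_mul_eq
    (hC2.integrable one_le_two) hφint hprod hcov
  refine ae_eq_const_of_ae_prod_eq ?_
  filter_upwards [hzero] with p hp
  rcases mul_eq_zero.1 hp with hC | hφC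
  · exact (sub_eq_zero.1 hC).symm
  · exact (hφ.injective (sub_eq_zero.1 hφC)).symm

/-- Equality case of Chebyshev's association inequality with the identity
(strictly increasing) and a strictly decreasing `φ`: if the covariance
`Cov(C, φ(C)) = 0`, i.e. `E[C·φ(C)] = E[C]·E[φ(C)]`, then `C` is almost surely
constant. -/
theorem chebyshev_association_equality_case
    {Ω : Type*} [MeasurableSpace Ω] (μ : Measure Ω) [IsProbabilityMeasure μ]
    (C : Ω → ℝ) (φ : ℝ → ℝ)
    (hC : Measurable C)
    (hC2 : MemLp C 2 μ)
    (hφ : StrictAnti φ)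
    (hφint : Integrable (fun ω => φ (C ω)) μ)
    (hprod : Integrable (fun ω => C ω * φ (C ω)) μ)
    (hcov : ∫ ω, C ω * φ (C ω) ∂μ = (∫ ω, C ω ∂μ) * ∫ ω, φ (C ω) ∂μ) :
    ∃ a : ℝ, C =ᵐ[μ] fun _ => a :=
  chebyshev_association_equality_case_general μ C φ hC2 hφ hφint hprod hcov
end

section
/- Let (G_j, C_j), j = 1, …, d, be i.i.d. pairs of strictly positive random variables with G_j independent of C_j and continuous distributions. Let m^{TopK} select the k indices of largest G_j and m^{CWMP} select the k indices of largest ratio G_j/C_j. Then E[∑_j m_j^{CWMP} C_j] ≤ E[∑_j m_j^{TopK} C_j] = k·E[C_1]. -/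
/-!
Write `m_j` for a mask and `c̄ = E[C_1]`. Since every mask has exactly `k` ones a.s.,
`E[∑ m_j C_j] = k c̄ + ∑_j (E[m_j C_j] - E[m_j] c̄)`, so it suffices to compare each `E[m_j C_j]`
with `E[m_j] c̄`. The cost `C_j` is independent of `Z_j`, the values `G` together with the costs
`C_i`, `i ≠ j`. The Top-K mask `m_j` is a function of `Z_j` alone, so `E[m_j C_j] = E[m_j] c̄`.
The CWMP mask is `H(C_j, Z_j)` with `H(·, z)` antitone, since raising `C_j` only lowers the ratio
`G_j / C_j`; integrating `(C_j - c̄) (H(C_j, Z_j) - H(c̄, Z_j)) ≤ 0` and using independence gives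
`E[m_j C_j] ≤ E[m_j] c̄` (Chebyshev's association inequality).
-/

open MeasureTheory ProbabilityTheory Finset

section TopKMask

variable {ι : Type*} [Fintype ι]

noncomputable def topKMask (k : ℕ) (x : ι → ℝ) (j : ι) : ℝ :=
  if #{i | x j ≤ x i} ≤ k then 1 else 0

lemma card_filter_rank_le_eq {k : ℕ} {x : ι → ℝ} (hx : Function.Injective x)
    (hk : k ≤ Fintype.card ι) : #{j | #{i | x j ≤ x i} ≤ k} = k := by
  classical
  set r : ι → ℕ := fun j => #{i | x j ≤ x i}
  have r_anti : ∀ a b, x a < x b → r b < r a := fun a b hab =>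
    card_lt_card <| (ssubset_iff_of_subset fun i hi => by
      simp only [mem_filter, mem_univ, true_and] at hi ⊢; exact hab.le.trans hi).2
      ⟨a, by simp, by simpa using hab⟩
  have r_inj : Function.Injective r := fun a b hab => by
    rcases lt_trichotomy (x a) (x b) with h | h | h
    · exact absurd hab (r_anti a b h).ne'
    · exact hx h
    · exact absurd hab (r_anti b a h).ne
  have r_image : univ.image r = Icc 1 (Fintype.card ι) :=
    eq_of_subset_of_card_le
      (fun n hn => by
        obtain ⟨j, -, rfl⟩ := mem_image.1 hn
        exact mem_Icc.2 ⟨card_pos.2 ⟨j, by simp⟩, card_le_univ _⟩)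
      (by simp [card_image_of_injective _ r_inj])
  calc #{j | r j ≤ k} = #((univ.image r).filter (· ≤ k)) := by
        rw [filter_image, card_image_of_injective _ r_inj]
    _ = #(Icc 1 k) := by
        rw [r_image]; congr 1; ext n; simp only [mem_filter, mem_Icc]; omega
    _ = k := by simp

lemma sum_topKMask {k : ℕ} {x : ι → ℝ} (hx : Function.Injective x)
    (hk : k ≤ Fintype.card ι) : ∑ j, topKMask k x j = k := by
  simp only [topKMask]
  rw [sum_boole, card_filter_rank_le_eq hx hk]

lemma topKMask_le_topKMask {k : ℕ} {x y : ι → ℝ} {j : ι} (hj : x j ≤ y j)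
    (hi : ∀ i ≠ j, y i ≤ x i) : topKMask k x j ≤ topKMask k y j := by
  have hcard : #{i | y j ≤ y i} ≤ #{i | x j ≤ x i} := card_le_card fun i => by
    simp only [mem_filter, mem_univ, true_and]
    by_cases h : i = j
    · simp [h]
    · exact fun hy => hj.trans (hy.trans (hi i h))
  unfold topKMask
  split_ifs <;> first | omega | norm_num

lemma antitoneOn_topKMask_div_update [DecidableEq ι] (k : ℕ) {g : ι → ℝ} (v : ι → ℝ) {j : ι}
    (hg : 0 ≤ g j) :
    AntitoneOn (fun c => topKMask k (g / Function.update v j c) j) (Set.Ioi 0) :=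
  fun c hc c' _ hcc' => topKMask_le_topKMask
    (by simpa using div_le_div_of_nonneg_left hg hc hcc')
    (fun i hi => by simp [hi])

lemma norm_topKMask_le (k : ℕ) (x : ι → ℝ) (j : ι) : ‖topKMask k x j‖ ≤ 1 := by
  unfold topKMask; split_ifs <;> simp

lemma measurable_topKMask (k : ℕ) (j : ι) : Measurable fun x : ι → ℝ => topKMask k x j := by
  have hcard : Measurable fun x : ι → ℝ => #{i | x j ≤ x i} := by
    simp only [card_filter]
    exact Finset.measurable_sum _ fun i _ => Measurable.ite
      (measurableSet_le (measurable_pi_apply j) (measurable_pi_apply i))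
      measurable_const measurable_const
  exact Measurable.ite (measurableSet_le hcard measurable_const) measurable_const measurable_const

end TopKMask

section Integral

variable {Ω : Type*} [MeasurableSpace Ω] {μ : Measure Ω}

lemma integral_pos_of_ae_pos [NeZero μ] {X : Ω → ℝ} (hX : Integrable X μ)
    (hpos : ∀ᵐ ω ∂μ, 0 < X ω) : 0 < ∫ ω, X ω ∂μ := by
  rw [integral_pos_iff_support_of_nonneg_ae (hpos.mono fun _ => le_of_lt) hX, pos_iff_ne_zero]
  intro h0
  have : ∀ᵐ _ ∂μ, False := by
    filter_upwards [measure_eq_zero_iff_ae_notMem.1 h0, hpos] with ω h1 h2 using h1 h2.ne'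
  exact NeZero.ne μ (ae_eq_bot.1 (Filter.eventually_false_iff_eq_bot.1 this))

lemma integral_sum_mul_eq_of_sum_eq [IsProbabilityMeasure μ] {ι : Type*} [Fintype ι]
    {m C : ι → Ω → ℝ} {k : ℝ} (c : ℝ) (hm : ∀ j, Measurable (m j))
    (hm1 : ∀ j ω, ‖m j ω‖ ≤ 1) (hC : ∀ j, Integrable (C j) μ)
    (hsum : ∀ᵐ ω ∂μ, ∑ j, m j ω = k) :
    ∫ ω, ∑ j, m j ω * C j ω ∂μ =
      k * c + ∑ j, (∫ ω, m j ω * C j ω ∂μ - (∫ ω, m j ω ∂μ) * c) := by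
  have hmint : ∀ j, Integrable (m j) μ := fun j =>
    (integrable_const 1).mono' (hm j).aestronglyMeasurable (.of_forall (hm1 j))
  rw [integral_finsetSum _ fun j _ =>
      (hC j).bdd_mul (hm j).aestronglyMeasurable (.of_forall (hm1 j)),
    sum_sub_distrib, ← sum_mul, ← integral_finsetSum _ fun j _ => hmint j,
    integral_congr_ae hsum]
  simp

end Integral

namespace ProbabilityTheory

variable {Ω : Type*} [MeasurableSpace Ω] {μ : Measure Ω}

lemma IndepFun.prodMk_right {α β γ : Type*} [MeasurableSpace α] [MeasurableSpace β]
    [MeasurableSpace γ] [IsFiniteMeasure μ] {X : Ω → α} {Y : Ω → β} {Z : Ω → γ}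
    (hX : Measurable X) (hY : Measurable Y) (hZ : Measurable Z)
    (hXY : IndepFun X Y μ) (hXYZ : IndepFun (fun ω => (X ω, Y ω)) Z μ) :
    IndepFun X (fun ω => (Y ω, Z ω)) μ := by
  have hYZ : IndepFun Y Z μ := hXYZ.comp measurable_snd measurable_id
  rw [indepFun_iff_map_prod_eq_prod_map_map hX.aemeasurable (hY.prodMk hZ).aemeasurable,
    hYZ.map_prod_eq_prod_map_map hY.aemeasurable hZ.aemeasurable,
    ← Measure.prodAssoc_prod, ← hXY.map_prod_eq_prod_map_map hX.aemeasurable hY.aemeasurable,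
    ← hXYZ.map_prod_eq_prod_map_map (hX.prodMk hY).aemeasurable hZ.aemeasurable,
    Measure.map_map MeasurableEquiv.prodAssoc.measurable ((hX.prodMk hY).prodMk hZ)]
  rfl

lemma iIndepFun.indepFun_snd_prodMk_update {ι β γ : Type*} [Fintype ι] [DecidableEq ι]
    [MeasurableSpace β] [MeasurableSpace γ] [IsProbabilityMeasure μ] {P : ι → Ω → β × γ}
    (hP : iIndepFun P μ) (hPm : ∀ i, Measurable (P i)) {j : ι}
    (hj : IndepFun (fun ω => (P j ω).1) (fun ω => (P j ω).2) μ) (c : γ) :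
    IndepFun (fun ω => (P j ω).2)
      (fun ω => (fun i => (P i ω).1, Function.update (fun i => (P i ω).2) j c)) μ := by
  have hj_mem : j ∈ ({j} : Finset ι) := mem_singleton_self j
  have hne : ∀ i, i ≠ j → i ∈ ({j}ᶜ : Finset ι) := fun i h => by simpa using h
  set W : Ω → ({j}ᶜ : Finset ι) → β × γ := fun ω i => P i ω
  have hW : Measurable W := measurable_pi_lambda _ fun i => hPm i
  have hPW : IndepFun (fun ω => ((P j ω).2, (P j ω).1)) W μ :=
    (hP.indepFun_finset {j} {j}ᶜ disjoint_compl_right hPm).comp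
      (φ := fun v => ((v ⟨j, hj_mem⟩).2, (v ⟨j, hj_mem⟩).1)) (by fun_prop) measurable_id
  have hPW' := IndepFun.prodMk_right (hPm j).snd (hPm j).fst hW hj.symm hPW
  let Φ : β × (({j}ᶜ : Finset ι) → β × γ) → (ι → β) × (ι → γ) := fun p =>
    (fun i => if h : i = j then p.1 else (p.2 ⟨i, hne i h⟩).1,
     fun i => if h : i = j then c else (p.2 ⟨i, hne i h⟩).2)
  have hΦ : Measurable Φ := by
    refine .prodMk (measurable_pi_lambda _ fun i => ?_) (measurable_pi_lambda _ fun i => ?_) <;>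
      by_cases h : i = j <;> simp only [h, dite_true, dite_false] <;> fun_prop
  have hZ : (fun ω => (fun i => (P i ω).1, Function.update (fun i => (P i ω).2) j c)) =
      Φ ∘ fun ω => ((P j ω).1, W ω) := by
    funext ω
    refine Prod.ext ?_ ?_ <;> funext i <;> by_cases h : i = j <;> simp [Φ, W, h]
  rw [hZ]
  exact hPW'.comp measurable_id hΦ

theorem IndepFun.integral_mul_le_of_antitoneOn [IsProbabilityMeasure μ] {Γ : Type*}
    [MeasurableSpace Γ] {X : Ω → ℝ} {Z : Ω → Γ} {H : ℝ → Γ → ℝ} {B : ℝ} (hXZ : IndepFun X Z μ)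
    (hX : Measurable X) (hZ : Measurable Z) (hXint : Integrable X μ) (hXpos : ∀ᵐ ω ∂μ, 0 < X ω)
    (hH : Measurable (Function.uncurry H)) (hHB : ∀ c z, ‖H c z‖ ≤ B)
    (hanti : ∀ᵐ ω ∂μ, AntitoneOn (fun c => H c (Z ω)) (Set.Ioi 0)) :
    ∫ ω, H (X ω) (Z ω) * X ω ∂μ ≤ (∫ ω, H (X ω) (Z ω) ∂μ) * ∫ ω, X ω ∂μ := by
  set c₀ := ∫ ω, X ω ∂μ
  have hc₀ : 0 < c₀ := integral_pos_of_ae_pos hXint hXpos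
  have hHXZ : Measurable fun ω => H (X ω) (Z ω) := hH.comp (hX.prodMk hZ)
  have hHc₀ : Measurable fun ω => H c₀ (Z ω) := hH.comp (measurable_const.prodMk hZ)
  have i₁ : Integrable (fun ω => H (X ω) (Z ω)) μ :=
    (integrable_const B).mono' hHXZ.aestronglyMeasurable (.of_forall fun _ => hHB _ _)
  have i₂ : Integrable (fun ω => H c₀ (Z ω)) μ :=
    (integrable_const B).mono' hHc₀.aestronglyMeasurable (.of_forall fun _ => hHB _ _)
  have i₃ : Integrable (fun ω => H c₀ (Z ω) * X ω) μ :=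
    hXint.bdd_mul hHc₀.aestronglyMeasurable (.of_forall fun _ => hHB _ _)
  have i₄ : Integrable (fun ω => c₀ * H (X ω) (Z ω) + H c₀ (Z ω) * X ω) μ :=
    (i₁.const_mul c₀).add i₃
  have hc₀_indep : ∫ ω, H c₀ (Z ω) * X ω ∂μ = (∫ ω, H c₀ (Z ω) ∂μ) * c₀ :=
    (hXZ.comp measurable_id hH.of_uncurry_left).symm.integral_fun_mul_eq_mul_integral
      hHc₀.aestronglyMeasurable hX.aestronglyMeasurable
  -- `(X - c₀) (H(X, Z) - H(c₀, Z)) ≤ 0`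
  have hpt : ∀ᵐ ω ∂μ, H (X ω) (Z ω) * X ω ≤
      c₀ * H (X ω) (Z ω) + H c₀ (Z ω) * X ω - c₀ * H c₀ (Z ω) := by
    filter_upwards [hanti, hXpos] with ω hω hXω
    rcases le_total (X ω) c₀ with h | h
    · nlinarith [hω hXω hc₀ h]
    · nlinarith [hω hc₀ hXω h]
  calc ∫ ω, H (X ω) (Z ω) * X ω ∂μ
      ≤ ∫ ω, c₀ * H (X ω) (Z ω) + H c₀ (Z ω) * X ω - c₀ * H c₀ (Z ω) ∂μ :=
        integral_mono_ae (hXint.bdd_mul hHXZ.aestronglyMeasurable (.of_forall fun _ => hHB _ _))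
          (i₄.sub (i₂.const_mul c₀)) hpt
    _ = (∫ ω, H (X ω) (Z ω) ∂μ) * c₀ := by
        rw [integral_sub i₄ (i₂.const_mul c₀), integral_add (i₁.const_mul c₀) i₃,
          integral_const_mul, integral_const_mul, hc₀_indep]
        ring

end ProbabilityTheory


section Masks

variable {Ω ι : Type*} [MeasurableSpace Ω] {μ : Measure Ω} [Fintype ι] [DecidableEq ι]
  {G C : ι → Ω → ℝ} (k : ℕ) {j : ι}

lemma integral_topKMask_mul_eq (hG : ∀ i, Measurable (G i)) (hC : Measurable (C j))
    (hind : IndepFun (C j) (fun ω => (fun i => G i ω, Function.update (fun i => C i ω) j 1)) μ) :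
    ∫ ω, topKMask k (fun i => G i ω) j * C j ω ∂μ =
      (∫ ω, topKMask k (fun i => G i ω) j ∂μ) * ∫ ω, C j ω ∂μ := by
  have hmask := measurable_topKMask (ι := ι) k j
  exact (hind.symm.comp (hmask.comp measurable_fst) measurable_id).integral_fun_mul_eq_mul_integral
    (hmask.comp (measurable_pi_lambda _ hG)).aestronglyMeasurable hC.aestronglyMeasurable

lemma integral_topKMask_div_mul_le [IsProbabilityMeasure μ] (hG : ∀ i, Measurable (G i))
    (hC : ∀ i, Measurable (C i))
    (hGpos : ∀ᵐ ω ∂μ, 0 < G j ω) (hCpos : ∀ᵐ ω ∂μ, 0 < C j ω) (hCint : Integrable (C j) μ)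
    (hind : IndepFun (C j) (fun ω => (fun i => G i ω, Function.update (fun i => C i ω) j 1)) μ) :
    ∫ ω, topKMask k (fun i => G i ω / C i ω) j * C j ω ∂μ ≤
      (∫ ω, topKMask k (fun i => G i ω / C i ω) j ∂μ) * ∫ ω, C j ω ∂μ := by
  have hH : Measurable (Function.uncurry fun c (z : (ι → ℝ) × (ι → ℝ)) =>
      topKMask k (z.1 / Function.update z.2 j c) j) :=
    (measurable_topKMask k j).comp (by fun_prop)
  have key := hind.integral_mul_le_of_antitoneOn (hC j) (by fun_prop) hCint hCpos hH
    (fun _ _ => norm_topKMask_le _ _ _) (by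
      filter_upwards [hGpos] with ω hω
      exact antitoneOn_topKMask_div_update (g := fun i => G i ω) k _ hω.le)
  simp only [Function.update_idem, Function.update_eq_self] at key
  exact key

end Masks

/-- Proposition 2: for i.i.d. pairs `(G j, C j)` of strictly positive random
variables with `G j` independent of `C j` and continuous distributions (so no
ties a.s.), the expected energy of the CWMP mask (top-k ratios `G j / C j`) is
at most that of the Top-K mask (top-k values `G j`), which equals `k·E[C 0]`. -/
theorem cwmp_vs_topk_expected_energy
    {Ω : Type*} [MeasurableSpace Ω] (μ : Measure Ω) [IsProbabilityMeasure μ]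
    (d k : ℕ) [NeZero d] (hk : k ≤ d)
    (G C : Fin d → Ω → ℝ)
    (hGmeas : ∀ j, Measurable (G j)) (hCmeas : ∀ j, Measurable (C j))
    (hGpos : ∀ j, ∀ᵐ ω ∂μ, 0 < G j ω) (hCpos : ∀ j, ∀ᵐ ω ∂μ, 0 < C j ω)
    (hCint : ∀ j, Integrable (C j) μ)
    -- the pairs (G j, C j) are i.i.d.
    (hiid : iIndepFun (fun j ω => (G j ω, C j ω)) μ)
    (hident : ∀ j, IdentDistrib (fun ω => (G j ω, C j ω))
      (fun ω => (G 0 ω, C 0 ω)) μ μ)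
    -- G j is independent of C j
    (hGC : ∀ j, IndepFun (G j) (C j) μ)
    -- continuity of the distributions: almost surely no ties
    (hties : ∀ᵐ ω ∂μ, Function.Injective (fun j => G j ω) ∧
      Function.Injective (fun j => G j ω / C j ω))
    -- the two masks, as indicator functions
    (mTopK mCWMP : Fin d → Ω → ℝ)
    (hTopK : ∀ j ω, mTopK j ω =
      if (Finset.univ.filter fun i => G j ω ≤ G i ω).card ≤ k then 1 else 0)
    (hCWMP : ∀ j ω, mCWMP j ω =
      if (Finset.univ.filter fun i => G j ω / C j ω ≤ G i ω / C i ω).card ≤ k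
      then 1 else 0) :
    ∫ ω, ∑ j, mCWMP j ω * C j ω ∂μ ≤ ∫ ω, ∑ j, mTopK j ω * C j ω ∂μ ∧
    ∫ ω, ∑ j, mTopK j ω * C j ω ∂μ = (k : ℝ) * ∫ ω, C 0 ω ∂μ := by
  obtain rfl : mTopK = fun j ω => topKMask k (fun i => G i ω) j :=
    funext fun j => funext (hTopK j)
  obtain rfl : mCWMP = fun j ω => topKMask k (fun i => G i ω / C i ω) j :=
    funext fun j => funext (hCWMP j)
  beta_reduce
  have hmean : ∀ j, ∫ ω, C j ω ∂μ = ∫ ω, C 0 ω ∂μ := fun j =>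
    ((hident j).comp measurable_snd).integral_eq
  have hind : ∀ j, IndepFun (C j)
      (fun ω => (fun i => G i ω, Function.update (fun i => C i ω) j 1)) μ := fun j =>
    hiid.indepFun_snd_prodMk_update (fun i => (hGmeas i).prodMk (hCmeas i)) (hGC j) 1
  have hk' : k ≤ Fintype.card (Fin d) := by simpa using hk
  rw [integral_sum_mul_eq_of_sum_eq (m := fun j ω => topKMask k (fun i => G i ω) j)
      (∫ ω, C 0 ω ∂μ)
      (fun j => (measurable_topKMask k j).comp (measurable_pi_lambda _ hGmeas))
      (fun _ _ => norm_topKMask_le _ _ _) hCint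
      (by filter_upwards [hties] with ω h using sum_topKMask h.1 hk'),
    integral_sum_mul_eq_of_sum_eq (m := fun j ω => topKMask k (fun i => G i ω / C i ω) j)
      (∫ ω, C 0 ω ∂μ)
      (fun j => (measurable_topKMask k j).comp
        (measurable_pi_lambda _ fun i => (hGmeas i).div (hCmeas i)))
      (fun _ _ => norm_topKMask_le _ _ _) hCint
      (by filter_upwards [hties] with ω h using sum_topKMask h.2 hk')]
  simp only [integral_topKMask_mul_eq k hGmeas (hCmeas _) (hind _), hmean, sub_self,
    sum_const_zero, add_zero, and_true]
  refine add_le_of_nonpos_right (sum_nonpos fun j _ => sub_nonpos.2 ?_)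
  simpa only [hmean] using
    integral_topKMask_div_mul_le k hGmeas hCmeas (hGpos j) (hCpos j) (hCint j) (hind j)
end
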